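/- For a,b ∈ ℕ with |a − b| ≥ 2, the complete bipartite graph K(a,b) is D-unique: any graph H with D(H,x) = D(K(a,b),x) is isomorphic to K(a,b). -/

import Mathlib

/-!
A set fails to dominate iff it misses some closed neighbourhood, so the non-dominating sets form
a down-set whose maximal members are complements of closed neighbourhoods, and `D(G, x)` counts
them in each size. Let `a + 2 ≤ b` and `D(H) = D(K(a, b))`. Then `H` has no non-dominating
`b`-set, exactly `b` non-dominating `(b - 1)`-sets, and at most `C(b, 2)` non-dominating
`(b - 2)`-sets. A double count shows that `b` sets of size `b - 1` whose shadow is that small are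
all the `(b - 1)`-subsets of one `b`-set `B`. Each `B \ {z}` is then the complement of some
`N[v_z]`; since `z ↦ v_z` is injective and `|Bᶜ| = a < b`, this forces `v_z = z`, so `B` is
independent and joined to every vertex of `Bᶜ`. Finally, the number of non-dominating
`(a - 1)`-sets forces every `Bᶜ \ {x}` to be non-dominating, which makes `Bᶜ` independent.
-/

/-- `S` dominates `G`: every vertex is in `S` or adjacent to a member of `S`. -/
def Dominates {V : Type*} (G : SimpleGraph V) (S : Set V) : Prop :=
  ∀ v : V, v ∈ S ∨ ∃ u ∈ S, G.Adj u v

/-- number of dominating sets of cardinality `i`. -/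
noncomputable def numDom {V : Type*} [Fintype V] (G : SimpleGraph V) (i : ℕ) : ℕ :=
  Nat.card {S : Finset V // S.card = i ∧ Dominates G ↑S}

/-- the domination polynomial `D(G,x) = Σ_{i=1}^{n} d(G,i) x^i`. -/
noncomputable def domPoly {V : Type*} [Fintype V] (G : SimpleGraph V) : Polynomial ℤ :=
  ∑ i ∈ Finset.Icc 1 (Fintype.card V), (numDom G i : Polynomial ℤ) * Polynomial.X ^ i

/-- the join of two vertex-disjoint graphs. -/
def GJoin {α β : Type*} (G : SimpleGraph α) (H : SimpleGraph β) : SimpleGraph (α ⊕ β) where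
  Adj x y := match x, y with
    | Sum.inl a, Sum.inl b => G.Adj a b
    | Sum.inr a, Sum.inr b => H.Adj a b
    | _, _ => True
  symm := by constructor; rintro (a|a) (b|b) h <;> simp_all [SimpleGraph.adj_comm]
  loopless := by constructor; rintro (a|a) h <;> simp_all

/-- `H_t(a)`: a copy of `K_a` and a copy of `K_{a+t}`, connected by a matching
from `K_a` into `K_{a+t}`. -/
def Hgraph (a t : ℕ) : SimpleGraph (Fin a ⊕ Fin (a + t)) where
  Adj x y := match x, y with
    | Sum.inl i, Sum.inl j => i ≠ j
    | Sum.inr i, Sum.inr j => i ≠ j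
    | Sum.inl i, Sum.inr j => (j : ℕ) = (i : ℕ)
    | Sum.inr i, Sum.inl j => (i : ℕ) = (j : ℕ)
  symm := by constructor; rintro (i|i) (j|j) h <;> simp_all <;> omega
  loopless := by constructor; rintro (i|i) h <;> simp_all

open Finset
open scoped FinsetFamily

section Domination

variable {V : Type*}

theorem Dominates.mono {G : SimpleGraph V} {S T : Set V} (hS : Dominates G S) (hST : S ⊆ T) :
    Dominates G T :=
  fun v => (hS v).imp (@hST v) fun ⟨u, hu, huv⟩ => ⟨u, hST hu, huv⟩

theorem SimpleGraph.Iso.dominates_image_iff {V' : Type*} {G : SimpleGraph V}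
    {G' : SimpleGraph V'} (e : G ≃g G') {S : Set V} :
    Dominates G' (e '' S) ↔ Dominates G S := by
  refine ⟨fun h v => ?_, fun h v' => ?_⟩
  · obtain hv | ⟨_, ⟨u, hu, rfl⟩, hadj⟩ := h (e v)
    · exact .inl (e.injective.mem_set_image.1 hv)
    · exact .inr ⟨u, hu, e.map_adj_iff.1 hadj⟩
  · obtain hv | ⟨u, hu, hadj⟩ := h (e.symm v')
    · exact .inl ⟨_, hv, e.apply_symm_apply v'⟩
    · exact .inr ⟨e u, Set.mem_image_of_mem e hu, by simpa using e.map_adj_iff.2 hadj⟩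

variable [Fintype V]

theorem numDom_congr {V' : Type*} [Fintype V'] {G : SimpleGraph V} {G' : SimpleGraph V'}
    (e : G ≃g G') (i : ℕ) : numDom G i = numDom G' i :=
  Nat.card_congr <| e.toEquiv.finsetCongr.subtypeEquiv fun S => by
    simp [Equiv.finsetCongr_apply, e.dominates_image_iff]

theorem domPoly_congr {V' : Type*} [Fintype V'] {G : SimpleGraph V} {G' : SimpleGraph V'}
    (e : G ≃g G') : domPoly G = domPoly G' := by
  simp only [domPoly, Fintype.card_congr e.toEquiv, numDom_congr e]

theorem numDom_card (G : SimpleGraph V) : numDom G (Fintype.card V) = 1 :=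
  Nat.card_eq_one_iff_exists.2 ⟨⟨univ, card_univ, fun v => .inl (by simp)⟩,
    fun ⟨S, hS, _⟩ => Subtype.ext (eq_univ_of_card S hS)⟩

theorem numDom_eq_zero_of_card_lt (G : SimpleGraph V) {i : ℕ} (hi : Fintype.card V < i) :
    numDom G i = 0 := by
  rw [numDom, Nat.card_eq_zero]
  exact .inl ⟨fun ⟨S, hS, _⟩ => by have := S.card_le_univ; omega⟩

theorem coeff_domPoly (G : SimpleGraph V) {i : ℕ} (hi : 0 < i) :
    (domPoly G).coeff i = numDom G i := by
  rw [domPoly, Polynomial.finsetSum_coeff]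
  simp only [← Polynomial.C_eq_natCast, Polynomial.coeff_C_mul_X_pow]
  rw [Finset.sum_ite_eq]
  split_ifs with h
  · rfl
  · rw [numDom_eq_zero_of_card_lt G (by simp at h; omega)]; simp

theorem natDegree_domPoly (G : SimpleGraph V) : (domPoly G).natDegree = Fintype.card V := by
  refine le_antisymm (Polynomial.natDegree_sum_le_of_forall_le _ _ fun i hi => ?_) ?_
  · exact (Polynomial.natDegree_C_mul_X_pow_le _ _).trans (mem_Icc.1 hi).2
  · rcases Nat.eq_zero_or_pos (Fintype.card V) with h | h
    · simp [h]
    · exact Polynomial.le_natDegree_of_ne_zero (by simp [coeff_domPoly G h, numDom_card])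

open Classical in
noncomputable def nonNeighborFinset (G : SimpleGraph V) (v : V) : Finset V :=
  {u | u ≠ v ∧ ¬ G.Adj v u}

open Classical in
noncomputable def nonDominatingSets (G : SimpleGraph V) (i : ℕ) : Finset (Finset V) :=
  (powersetCard i univ).filter fun S => ¬ Dominates G ↑S

variable {G : SimpleGraph V} {S : Finset V} {i : ℕ}

theorem mem_nonNeighborFinset {u v : V} : u ∈ nonNeighborFinset G v ↔ u ≠ v ∧ ¬ G.Adj v u := by
  simp [nonNeighborFinset]

theorem mem_nonDominatingSets : S ∈ nonDominatingSets G i ↔ #S = i ∧ ¬ Dominates G ↑S := by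
  simp [nonDominatingSets]

theorem notMem_nonNeighborFinset_self (v : V) : v ∉ nonNeighborFinset G v := by
  simp [mem_nonNeighborFinset]

theorem not_dominates_iff_exists_subset_nonNeighborFinset :
    ¬ Dominates G ↑S ↔ ∃ v, S ⊆ nonNeighborFinset G v := by
  simp only [Dominates, not_forall, not_or, not_exists, not_and, subset_iff,
    mem_nonNeighborFinset, mem_coe]
  refine exists_congr fun v => ⟨fun ⟨hv, hadj⟩ u hu => ⟨?_, fun h => hadj u hu h.symm⟩,
    fun h => ⟨fun hv => (h hv).1 rfl, fun u hu huv => (h hu).2 huv.symm⟩⟩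
  rintro rfl; exact hv hu

theorem not_dominates_nonNeighborFinset (v : V) : ¬ Dominates G ↑(nonNeighborFinset G v) :=
  not_dominates_iff_exists_subset_nonNeighborFinset.2 ⟨v, subset_rfl⟩

theorem exists_nonNeighborFinset_eq_of_maximal (hS : ¬ Dominates G ↑S)
    (hmax : ∀ T : Finset V, ¬ Dominates G ↑T → #T ≤ #S) : ∃ v, nonNeighborFinset G v = S := by
  obtain ⟨v, hv⟩ := not_dominates_iff_exists_subset_nonNeighborFinset.1 hS
  exact ⟨v, (eq_of_subset_of_card_le hv (hmax _ (not_dominates_nonNeighborFinset v))).symm⟩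

theorem numDom_add_card_nonDominatingSets (G : SimpleGraph V) (i : ℕ) :
    numDom G i + #(nonDominatingSets G i) = (Fintype.card V).choose i := by
  classical
  have hdom : numDom G i = #((powersetCard i univ).filter fun S : Finset V => Dominates G ↑S) := by
    rw [numDom, Nat.card_eq_fintype_card, Fintype.card_subtype]
    congr 1
    ext S
    simp
  rw [hdom, nonDominatingSets, card_filter_add_card_filter_not, card_powersetCard, card_univ]

theorem card_nonDominatingSets_eq_of_domPoly_eq {V' : Type*} [Fintype V'] {G' : SimpleGraph V'}
    (h : domPoly G = domPoly G') (hi : 0 < i) :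
    #(nonDominatingSets G i) = #(nonDominatingSets G' i) := by
  have hV : Fintype.card V = Fintype.card V' := by
    rw [← natDegree_domPoly G, h, natDegree_domPoly]
  have hnum : numDom G i = numDom G' i := by
    exact_mod_cast (coeff_domPoly G hi).symm.trans (h ▸ coeff_domPoly G' hi)
  have := numDom_add_card_nonDominatingSets G i
  have := numDom_add_card_nonDominatingSets G' i
  rw [hV] at *
  omega

theorem card_lt_of_nonDominatingSets_eq_empty {m : ℕ} (h : nonDominatingSets G m = ∅)
    (hS : ¬ Dominates G ↑S) : #S < m := by
  by_contra! hm
  obtain ⟨T, hTS, hT⟩ := exists_subset_card_eq hm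
  exact (eq_empty_iff_forall_notMem.1 h) T
    (mem_nonDominatingSets.2 ⟨hT, fun hd => hS (hd.mono (coe_subset.2 hTS))⟩)

theorem shadow_nonDominatingSets_subset [DecidableEq V] (G : SimpleGraph V) (i : ℕ) :
    ∂ (nonDominatingSets G (i + 1)) ⊆ nonDominatingSets G i := by
  intro S hS
  obtain ⟨T, hT, hST, hcard⟩ := mem_shadow_iff_exists_mem_card_add_one.1 hS
  rw [mem_nonDominatingSets] at hT ⊢
  exact ⟨by omega, fun hd => hT.2 (hd.mono (coe_subset.2 hST))⟩

end Domination

section Shadow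

variable {α : Type*} [DecidableEq α] {k : ℕ} {𝒯 : Finset (Finset α)}

theorem filter_subset_shadow_eq_powersetCard (h𝒯 : (𝒯 : Set (Finset α)).Sized (k + 1))
    {T U : Finset α} (hT : T ∈ 𝒯) (hUT : U ⊆ T) :
    {S ∈ ∂ 𝒯 | S ⊆ U} = U.powersetCard k := by
  ext S
  rw [mem_filter, mem_powersetCard]
  refine ⟨fun ⟨hS, hSU⟩ => ⟨hSU, h𝒯.shadow hS⟩, fun ⟨hSU, hS⟩ => ⟨?_, hSU⟩⟩
  exact mem_shadow_iff_exists_mem_card_add_one.2 ⟨T, hT, hSU.trans hUT, by rw [h𝒯 hT, hS]⟩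

theorem sum_card_supersets_shadow (h𝒯 : (𝒯 : Set (Finset α)).Sized (k + 1)) :
    ∑ S ∈ ∂ 𝒯, #{T ∈ 𝒯 | S ⊆ T} = #𝒯 * (k + 1) := by
  have := sum_card_bipartiteAbove_eq_sum_card_bipartiteBelow (s := ∂ 𝒯) (t := 𝒯) (r := (· ⊆ ·))
  simp only [bipartiteAbove, bipartiteBelow] at this
  rw [this, sum_congr rfl fun T hT => by
    rw [filter_subset_shadow_eq_powersetCard h𝒯 hT subset_rfl, card_powersetCard, h𝒯 hT,
      Nat.choose_succ_self_right], sum_const, smul_eq_mul]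

theorem sum_card_offDiag_supersets_shadow (h𝒯 : (𝒯 : Set (Finset α)).Sized (k + 1)) :
    ∑ S ∈ ∂ 𝒯, #{T ∈ 𝒯 | S ⊆ T}.offDiag = ∑ p ∈ 𝒯.offDiag, (#(p.1 ∩ p.2)).choose k := by
  have := sum_card_bipartiteAbove_eq_sum_card_bipartiteBelow (s := ∂ 𝒯) (t := 𝒯.offDiag)
    (r := fun S p => S ⊆ p.1 ∩ p.2)
  simp only [bipartiteAbove, bipartiteBelow] at this
  convert this using 2 with S _ p hp
  · congr 1
    ext ⟨T, T'⟩
    simp only [mem_offDiag, mem_filter, subset_inter_iff]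
    tauto
  · rw [filter_subset_shadow_eq_powersetCard h𝒯 (mem_offDiag.1 hp).1 inter_subset_left,
      card_powersetCard]

theorem card_inter_lt_of_ne {T T' : Finset α} (hcard : #T = #T') (hne : T ≠ T') :
    #(T ∩ T') < #T := by
  refine card_lt_card (inter_subset_left.ssubset_of_ne fun h => hne ?_)
  exact eq_of_subset_of_card_le (inter_eq_left.1 h) hcard.ge

theorem card_inter_eq_and_card_supersets_le_two (h𝒯 : (𝒯 : Set (Finset α)).Sized (k + 1))
    (hcard : #𝒯 = k + 2) (hshadow : #(∂ 𝒯) ≤ (k + 2).choose 2) :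
    (∀ p ∈ 𝒯.offDiag, #(p.1 ∩ p.2) = k) ∧ ∀ S ∈ ∂ 𝒯, #{T ∈ 𝒯 | S ⊆ T} ≤ 2 := by
  have hinter : ∀ p ∈ 𝒯.offDiag, #(p.1 ∩ p.2) ≤ k := fun p hp => by
    obtain ⟨hT, hT', hne⟩ := mem_offDiag.1 hp
    have := card_inter_lt_of_ne (by rw [h𝒯 hT, h𝒯 hT']) hne
    rw [h𝒯 hT] at this
    omega
  have hchoose : ∀ p ∈ 𝒯.offDiag, (#(p.1 ∩ p.2)).choose k ≤ 1 := fun p hp => by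
    rcases (hinter p hp).lt_or_eq with h | h
    · simp [Nat.choose_eq_zero_of_lt h]
    · simp [h]
  have hpair : 2 * (k + 2).choose 2 = (k + 2) * (k + 1) := by
    have := Nat.add_one_mul_choose_eq (k + 1) 1
    simp at this; linarith
  have hoff : #𝒯.offDiag = (k + 2) * (k + 1) := by
    rw [offDiag_card, hcard, ← Nat.mul_sub_one]; rfl
  -- Writing `d S = #{T ∈ 𝒯 | S ⊆ T}`: `∑ d = (k + 2) (k + 1)`, `∑ d (d - 1) ≤ (k + 2) (k + 1)`
  -- as two members share at most one `k`-set, and `2 d ≤ 2 + d (d - 1)`. The bound on `#∂𝒯`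
  -- makes all of these tight.
  have hpoint : ∀ S ∈ ∂ 𝒯, 2 * #{T ∈ 𝒯 | S ⊆ T} ≤ 2 + #{T ∈ 𝒯 | S ⊆ T}.offDiag :=
    fun S _ => by
    have := Nat.le_mul_self #{T ∈ 𝒯 | S ⊆ T}
    rw [offDiag_card]; zify [this]; nlinarith
  have hlhs : ∑ S ∈ ∂ 𝒯, 2 * #{T ∈ 𝒯 | S ⊆ T} = 2 * ((k + 2) * (k + 1)) := by
    rw [← mul_sum, sum_card_supersets_shadow h𝒯, hcard]
  have hrhs : ∑ S ∈ ∂ 𝒯, (2 + #{T ∈ 𝒯 | S ⊆ T}.offDiag) =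
      2 * #(∂ 𝒯) + ∑ p ∈ 𝒯.offDiag, (#(p.1 ∩ p.2)).choose k := by
    rw [sum_add_distrib, sum_const, smul_eq_mul, mul_comm, sum_card_offDiag_supersets_shadow h𝒯]
  have hle := sum_le_sum hpoint
  have hc := sum_le_sum hchoose
  rw [sum_const, smul_eq_mul, mul_one, hoff] at hc
  refine ⟨fun p hp => ?_, fun S hS => ?_⟩
  · have hp₁ := (sum_eq_sum_iff_of_le hchoose).1
      (by rw [sum_const, smul_eq_mul, mul_one, hoff]; linarith) p hp
    rcases (hinter p hp).lt_or_eq with h | h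
    · simp [Nat.choose_eq_zero_of_lt h] at hp₁
    · exact h
  · have hd := (sum_eq_sum_iff_of_le hpoint).1 (by linarith) S hS
    have := Nat.le_mul_self #{T ∈ 𝒯 | S ⊆ T}
    rw [offDiag_card] at hd; zify [this] at hd; nlinarith

theorem inter_subset_of_not_subset_union {T₁ T₂ T₃ : Finset α} (h₃ : #T₃ = k + 1)
    (h₁₃ : #(T₁ ∩ T₃) = k) (h₂₃ : #(T₂ ∩ T₃) = k) (h₁₂ : #(T₁ ∩ T₂) = k)
    (h : ¬ T₃ ⊆ T₁ ∪ T₂) : T₁ ∩ T₂ ⊆ T₃ := by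
  have hU : #(T₃ ∩ (T₁ ∪ T₂)) ≤ k := by
    have := card_lt_card (inter_subset_left.ssubset_of_ne (mt inter_eq_left.1 h))
    omega
  have e₁ : T₁ ∩ T₃ = T₃ ∩ (T₁ ∪ T₂) :=
    eq_of_subset_of_card_le (fun x hx => by simp_all) (by omega)
  have e₂ : T₂ ∩ T₃ = T₃ ∩ (T₁ ∪ T₂) :=
    eq_of_subset_of_card_le (fun x hx => by simp_all) (by omega)
  have e : T₁ ∩ T₃ = T₁ ∩ T₂ := eq_of_subset_of_card_le
    (fun x hx => mem_inter.2 ⟨(mem_inter.1 hx).1, (mem_inter.1 (e₂ ▸ e₁ ▸ hx)).1⟩) (by omega)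
  exact e ▸ inter_subset_right

theorem exists_eq_powersetCard_of_card_shadow_le (h𝒯 : (𝒯 : Set (Finset α)).Sized (k + 1))
    (hcard : #𝒯 = k + 2) (hshadow : #(∂ 𝒯) ≤ (k + 2).choose 2) :
    ∃ Z : Finset α, #Z = k + 2 ∧ 𝒯 = Z.powersetCard (k + 1) := by
  obtain ⟨hinter, hdeg⟩ := card_inter_eq_and_card_supersets_le_two h𝒯 hcard hshadow
  have hinter' : ∀ T ∈ 𝒯, ∀ T' ∈ 𝒯, T ≠ T' → #(T ∩ T') = k :=
    fun T hT T' hT' hne => hinter (T, T') (mem_offDiag.2 ⟨hT, hT', hne⟩)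
  obtain ⟨T₁, hT₁, T₂, hT₂, h₁₂⟩ := one_lt_card.1 (by omega : 1 < #𝒯)
  have hsub : ∀ T ∈ 𝒯, T ⊆ T₁ ∪ T₂ := by
    intro T hT
    by_contra hTU
    have h₁ : T₁ ≠ T := by rintro rfl; exact hTU subset_union_left
    have h₂ : T₂ ≠ T := by rintro rfl; exact hTU subset_union_right
    have hI := inter_subset_of_not_subset_union (h𝒯 hT) (hinter' _ hT₁ _ hT h₁)
      (hinter' _ hT₂ _ hT h₂) (hinter' _ hT₁ _ hT₂ h₁₂) hTU
    have hIshadow : T₁ ∩ T₂ ∈ ∂ 𝒯 := mem_shadow_iff_exists_mem_card_add_one.2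
      ⟨T₁, hT₁, inter_subset_left, by rw [h𝒯 hT₁, hinter' _ hT₁ _ hT₂ h₁₂]⟩
    have h3 : ({T₁, T₂, T} : Finset (Finset α)) ⊆ {T' ∈ 𝒯 | T₁ ∩ T₂ ⊆ T'} := by
      simp [insert_subset_iff, hT₁, hT₂, hT, inter_subset_left, inter_subset_right, hI]
    have := (card_le_card h3).trans (hdeg _ hIshadow)
    rw [card_insert_of_notMem (by simp [h₁₂, h₁]), card_pair h₂] at this
    omega
  have hZ : #(T₁ ∪ T₂) = k + 2 := by
    have := card_union_add_card_inter T₁ T₂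
    rw [h𝒯 hT₁, h𝒯 hT₂, hinter' _ hT₁ _ hT₂ h₁₂] at this
    omega
  refine ⟨T₁ ∪ T₂, hZ, eq_of_subset_of_card_le
    (fun T hT => mem_powersetCard.2 ⟨hsub T hT, h𝒯 hT⟩) ?_⟩
  rw [card_powersetCard, hZ, hcard, Nat.choose_succ_self_right]

end Shadow

section JoinSide

variable {V : Type*}

/-- `G` is the join of the edgeless graph on `B` with the graph induced on the complement. -/
def IsJoinSide (G : SimpleGraph V) (B : Finset V) : Prop :=
  ∀ ⦃z⦄, z ∈ B → ∀ w, G.Adj z w ↔ w ∉ B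

variable {G : SimpleGraph V} {B S : Finset V}

theorem IsJoinSide.dominates_iff_of_subset (hB : IsJoinSide G B) (hne : B.Nonempty)
    (hS : S ⊆ B) : Dominates G ↑S ↔ S = B := by
  refine ⟨fun hd => by_contra fun hSB => ?_, ?_⟩
  · obtain ⟨z, hzB, hzS⟩ := exists_of_ssubset (hS.ssubset_of_ne hSB)
    obtain h | ⟨u, hu, hadj⟩ := hd z
    · exact hzS h
    · exact (hB (hS hu) z).1 hadj hzB
  · rintro rfl v
    by_cases hv : v ∈ S
    · exact .inl hv
    · obtain ⟨z, hz⟩ := hne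
      exact .inr ⟨z, hz, (hB hz v).2 hv⟩

variable [Fintype V] [DecidableEq V]

theorem IsJoinSide.adj_iff (hB : IsJoinSide G B) (hBc : IsJoinSide G Bᶜ) {u w : V} :
    G.Adj u w ↔ (u ∈ B ↔ w ∉ B) := by
  by_cases hu : u ∈ B
  · simp [hB hu, hu]
  · simp [hBc (mem_compl.2 hu), hu]

theorem isJoinSide_iff_nonNeighborFinset :
    IsJoinSide G B ↔ ∀ z ∈ B, nonNeighborFinset G z = B.erase z := by
  simp only [IsJoinSide, Finset.ext_iff, mem_nonNeighborFinset, mem_erase]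
  refine forall₂_congr fun z hz => forall_congr' fun w => ?_
  by_cases hw : w = z
  · subst hw; simp [hz]
  · simp only [ne_eq, hw, not_false_eq_true, true_and]
    tauto

theorem isJoinSide_of_forall_exists_nonNeighborFinset_eq_erase (hcard : #Bᶜ < #B)
    (h : ∀ z ∈ B, ∃ v, nonNeighborFinset G v = B.erase z) : IsJoinSide G B := by
  choose! f hf using h
  have hf_mem : ∀ z ∈ B, f z ∈ B → f z = z := fun z hz hfz => by
    by_contra hne
    exact notMem_nonNeighborFinset_self (f z) (hf z hz ▸ mem_erase.2 ⟨hne, hfz⟩)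
  have hfix : ∀ z ∈ B, f z = z := by
    by_contra! ⟨z₀, hz₀, hne⟩
    -- `f` is injective on `B`, so it cannot map all of `B` into the smaller set `Bᶜ`
    obtain ⟨z₁, hz₁, hfz₁⟩ : ∃ z₁ ∈ B, f z₁ ∈ B := by
      by_contra! hout
      refine hcard.not_ge (card_le_card_of_injOn f (fun z hz => mem_compl.2 (hout z hz))
        fun z hz z' hz' hzz' => ?_)
      exact (erase_inj B hz).1 (by rw [← hf z hz, ← hf z' hz', hzz'])
    have hw : f z₀ ∉ B := fun h => hne (hf_mem z₀ hz₀ h)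
    have h₁ := hf_mem z₁ hz₁ hfz₁
    have hz₁' : nonNeighborFinset G z₁ = B.erase z₁ := by rw [← hf z₁ hz₁, h₁]
    have hnadj : ¬ G.Adj (f z₀) z₁ := (mem_nonNeighborFinset.1
      (hf z₀ hz₀ ▸ mem_erase.2 ⟨fun h => hne (h ▸ h₁), hz₁⟩)).2
    have hadj : G.Adj z₁ (f z₀) := by
      by_contra hnadj'
      have := hz₁' ▸ mem_nonNeighborFinset.2 ⟨fun h : f z₀ = z₁ => hw (h ▸ hz₁), hnadj'⟩
      exact hw (mem_of_mem_erase this)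
    exact hnadj hadj.symm
  exact isJoinSide_iff_nonNeighborFinset.2 fun z hz =>
    (congrArg (nonNeighborFinset G) (hfix z hz)).symm.trans (hf z hz)

theorem IsJoinSide.subset_or_subset_compl_of_not_dominates (hB : IsJoinSide G B)
    (hS : ¬ Dominates G ↑S) : S ⊆ B ∨ S ⊆ Bᶜ := by
  by_contra! h
  obtain ⟨z, hzS, hzB⟩ := not_subset.1 h.1
  obtain ⟨w, hwS, hwB⟩ := not_subset.1 h.2
  rw [mem_compl, not_not] at hwB
  refine hS fun v => .inr ?_
  by_cases hv : v ∈ B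
  · exact ⟨z, hzS, ((hB hv z).2 hzB).symm⟩
  · exact ⟨w, hwS, (hB hwB v).2 hv⟩

theorem IsJoinSide.not_dominates_iff (hB : IsJoinSide G B) (hBc : IsJoinSide G Bᶜ)
    (hne : B.Nonempty) (hne' : Bᶜ.Nonempty) :
    ¬ Dominates G ↑S ↔ (S ⊆ B ∧ S ≠ B) ∨ (S ⊆ Bᶜ ∧ S ≠ Bᶜ) := by
  refine ⟨fun hS => ?_, ?_⟩
  · rcases hB.subset_or_subset_compl_of_not_dominates hS with h | h
    · exact .inl ⟨h, fun e => hS ((hB.dominates_iff_of_subset hne h).2 e)⟩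
    · exact .inr ⟨h, fun e => hS ((hBc.dominates_iff_of_subset hne' h).2 e)⟩
  · rintro (⟨h, hSB⟩ | ⟨h, hSB⟩)
    · rwa [hB.dominates_iff_of_subset hne h]
    · rwa [hBc.dominates_iff_of_subset hne' h]

theorem card_erase_self_powersetCard_add {α : Type*} [DecidableEq α] (s : Finset α) (i : ℕ) :
    #((s.powersetCard i).erase s) + (if i = #s then 1 else 0) = (#s).choose i := by
  split_ifs with h
  · rw [card_erase_add_one (mem_powersetCard.2 ⟨subset_rfl, h.symm⟩), card_powersetCard]
  · rw [erase_eq_of_notMem fun hs => h (mem_powersetCard.1 hs).2.symm, card_powersetCard,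
      add_zero]

theorem disjoint_powersetCard_compl {i : ℕ} (hi : 0 < i) :
    Disjoint (B.powersetCard i) (Bᶜ.powersetCard i) := by
  refine disjoint_left.2 fun S h₁ h₂ => ?_
  rw [mem_powersetCard] at h₁ h₂
  obtain ⟨x, hx⟩ := card_pos.1 (h₁.2 ▸ hi)
  exact mem_compl.1 (h₂.1 hx) (h₁.1 hx)

theorem IsJoinSide.card_nonDominatingSets (hB : IsJoinSide G B) (hBc : IsJoinSide G Bᶜ)
    (hne : B.Nonempty) (hne' : Bᶜ.Nonempty) {i : ℕ} (hi : 0 < i) :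
    #(nonDominatingSets G i) + (if i = #B then 1 else 0) + (if i = #Bᶜ then 1 else 0) =
      (#B).choose i + (#Bᶜ).choose i := by
  have hND : nonDominatingSets G i =
      (B.powersetCard i).erase B ∪ (Bᶜ.powersetCard i).erase Bᶜ := by
    ext S
    simp only [mem_nonDominatingSets, hB.not_dominates_iff hBc hne hne', mem_union, mem_erase,
      mem_powersetCard]
    tauto
  rw [hND, card_union_of_disjoint ((disjoint_powersetCard_compl hi).mono
    (erase_subset _ _) (erase_subset _ _))]
  have := card_erase_self_powersetCard_add B i
  have := card_erase_self_powersetCard_add Bᶜ i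
  omega

theorem IsJoinSide.not_dominates_compl_erase {m : ℕ} (hB : IsJoinSide G B) (hm : 0 < m)
    (hcard : #Bᶜ = m + 1) (h : #Bᶜ + (#B).choose m ≤ #(nonDominatingSets G m)) :
    ∀ x ∉ B, ¬ Dominates G ↑(Bᶜ.erase x) := by
  have hsub : nonDominatingSets G m ⊆ B.powersetCard m ∪ Bᶜ.powersetCard m := fun S hS => by
    obtain ⟨hc, hS⟩ := mem_nonDominatingSets.1 hS
    rcases hB.subset_or_subset_compl_of_not_dominates hS with h | h <;>
      simp [mem_powersetCard, h, hc]
  have heq := eq_of_subset_of_card_le hsub (by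
    rw [card_union_of_disjoint (disjoint_powersetCard_compl hm), card_powersetCard,
      card_powersetCard, hcard, Nat.choose_succ_self_right]
    omega)
  intro x hx
  have hmem : Bᶜ.erase x ∈ Bᶜ.powersetCard m := mem_powersetCard.2
    ⟨erase_subset _ _, by rw [card_erase_of_mem (mem_compl.2 hx), hcard]; rfl⟩
  exact (mem_nonDominatingSets.1 (heq ▸ mem_union_right _ hmem)).2

theorem IsJoinSide.compl_of_not_dominates_erase (hB : IsJoinSide G B)
    (h : ∀ x ∉ B, ¬ Dominates G ↑(Bᶜ.erase x)) : IsJoinSide G Bᶜ := by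
  intro x hx w
  rw [mem_compl] at hx
  rw [mem_compl, not_not]
  refine ⟨fun hadj => by_contra fun hw => h x hx fun v => ?_, fun hw => ((hB hw x).2 hx).symm⟩
  have hw' : w ∈ Bᶜ.erase x := mem_erase.2 ⟨hadj.ne.symm, mem_compl.2 hw⟩
  by_cases hv : v ∈ Bᶜ.erase x
  · exact .inl hv
  · refine .inr ⟨w, hw', ?_⟩
    rcases eq_or_ne v x with rfl | hvx
    · exact hadj.symm
    · have hvB : v ∈ B := by simpa [hvx] using hv
      exact ((hB hvB w).2 hw).symm

theorem IsJoinSide.nonempty_iso_completeBipartiteGraph (hB : IsJoinSide G B)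
    (hBc : IsJoinSide G Bᶜ) : Nonempty (G ≃g completeBipartiteGraph (Fin #Bᶜ) (Fin #B)) := by
  let e : G ≃g completeBipartiteGraph {x // x ∉ B} {x // x ∈ B} :=
    ⟨(Equiv.sumCompl (· ∈ B)).symm.trans (Equiv.sumComm _ _), fun {u w} => by
      by_cases hu : u ∈ B <;> by_cases hw : w ∈ B <;>
        simp [Equiv.sumCompl_symm_apply_of_pos, Equiv.sumCompl_symm_apply_of_neg, hu, hw,
          hB.adj_iff hBc]⟩
  exact ⟨e.trans (SimpleGraph.completeBipartiteGraphCongr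
    (Fintype.equivFinOfCardEq (by simp [card_compl])) (Fintype.equivFinOfCardEq (by simp)))⟩

end JoinSide

def completeBipartiteGraphComm (α β : Type*) :
    completeBipartiteGraph α β ≃g completeBipartiteGraph β α :=
  ⟨Equiv.sumComm α β, by rintro (a | b) (a' | b') <;> simp⟩

theorem card_nonDominatingSets_completeBipartiteGraph {α β : Type*} [Fintype α] [Fintype β]
    [Nonempty α] [Nonempty β] {i : ℕ} (hi : 0 < i) :
    #(nonDominatingSets (completeBipartiteGraph α β) i) + (if i = Fintype.card β then 1 else 0)
      + (if i = Fintype.card α then 1 else 0) =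
      (Fintype.card β).choose i + (Fintype.card α).choose i := by
  classical
  have hcompl : (univ.map .inr : Finset (α ⊕ β))ᶜ = univ.map .inl := by
    ext (a | b) <;> simp
  have hB : IsJoinSide (completeBipartiteGraph α β) (univ.map .inr) := by
    rintro (a | b) hz (a' | b') <;> simp_all
  have hBc : IsJoinSide (completeBipartiteGraph α β) (univ.map .inr)ᶜ := by
    rw [hcompl]
    rintro (a | b) hz (a' | b') <;> simp_all
  simpa [hcompl] using hB.card_nonDominatingSets hBc (by simp) (by simp [hcompl]) hi

theorem exists_isJoinSide_of_nonDominatingSets_eq_empty {V : Type*} [Fintype V] [DecidableEq V]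
    {G : SimpleGraph V} {k : ℕ} (hV : Fintype.card V < 2 * (k + 2))
    (htop : nonDominatingSets G (k + 2) = ∅) (hlevel₁ : #(nonDominatingSets G (k + 1)) = k + 2)
    (hlevel₂ : #(nonDominatingSets G k) ≤ (k + 2).choose 2) :
    ∃ B : Finset V, #B = k + 2 ∧ IsJoinSide G B := by
  obtain ⟨B, hB, hBsub⟩ := exists_eq_powersetCard_of_card_shadow_le
    (fun S hS => (mem_nonDominatingSets.1 hS).1) hlevel₁
    ((card_le_card (shadow_nonDominatingSets_subset G k)).trans hlevel₂)
  refine ⟨B, hB, isJoinSide_of_forall_exists_nonNeighborFinset_eq_erase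
    (by rw [card_compl, hB]; omega) fun z hz => ?_⟩
  have hmem : B.erase z ∈ nonDominatingSets G (k + 1) := hBsub ▸ mem_powersetCard.2
    ⟨erase_subset _ _, by rw [card_erase_of_mem hz, hB]; rfl⟩
  refine exists_nonNeighborFinset_eq_of_maximal (mem_nonDominatingSets.1 hmem).2 fun T hT => ?_
  have := card_lt_of_nonDominatingSets_eq_empty htop hT
  rw [(mem_nonDominatingSets.1 hmem).1]
  omega

theorem exists_isJoinSide_of_card_nonDominatingSets {W : Type*} [Fintype W] [DecidableEq W]
    {H : SimpleGraph W} {a k : ℕ} (ha : 0 < a) (hak : a ≤ k)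
    (hW : Fintype.card W = a + (k + 2))
    (hnd : ∀ i, 0 < i → #(nonDominatingSets H i) + (if i = k + 2 then 1 else 0)
      + (if i = a then 1 else 0) = (k + 2).choose i + a.choose i) :
    ∃ B : Finset W, #B = k + 2 ∧ IsJoinSide H B ∧ IsJoinSide H Bᶜ := by
  have htop : nonDominatingSets H (k + 2) = ∅ := by
    have := hnd (k + 2) (by omega)
    rw [Nat.choose_self, Nat.choose_eq_zero_of_lt (by omega : a < k + 2)] at this
    exact card_eq_zero.1 (by split_ifs at this <;> omega)
  have hlevel₁ : #(nonDominatingSets H (k + 1)) = k + 2 := by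
    have := hnd (k + 1) (by omega)
    rw [Nat.choose_succ_self_right, Nat.choose_eq_zero_of_lt (by omega : a < k + 1)] at this
    split_ifs at this <;> omega
  have hlevel₂ : #(nonDominatingSets H k) ≤ (k + 2).choose 2 := by
    have := hnd k (by omega)
    rw [Nat.choose_symm_add] at this
    rcases hak.lt_or_eq with h | rfl
    · rw [Nat.choose_eq_zero_of_lt h] at this
      split_ifs at this <;> omega
    · rw [Nat.choose_self] at this
      split_ifs at this <;> omega
  obtain ⟨B, hB, hjoin⟩ :=
    exists_isJoinSide_of_nonDominatingSets_eq_empty (by omega) htop hlevel₁ hlevel₂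
  have hBc : #Bᶜ = a := by rw [card_compl, hW, hB]; omega
  refine ⟨B, hB, hjoin, hjoin.compl_of_not_dominates_erase ?_⟩
  obtain ⟨m, rfl⟩ : ∃ m, a = m + 1 := ⟨a - 1, by omega⟩
  rcases m.eq_zero_or_pos with rfl | hm
  · intro x hx
    rw [card_eq_zero.1 (by rw [card_erase_of_mem (mem_compl.2 hx), hBc] : #(Bᶜ.erase x) = 0)]
    intro h
    obtain h | ⟨_, h, _⟩ := h x <;> simp at h
  · refine hjoin.not_dominates_compl_erase hm hBc ?_
    have := hnd m hm
    rw [Nat.choose_succ_self_right] at this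
    rw [hBc, hB]
    split_ifs at this <;> omega

/-- For `|a − b| ≥ 2`, the complete bipartite graph `K(a,b)` is `D`-unique. -/
theorem completeBipartite_D_unique {a b : ℕ} (ha : 0 < a) (hb : 0 < b)
    (hab : 2 ≤ |(a : ℤ) - (b : ℤ)|) {W : Type} [Fintype W] (H : SimpleGraph W)
    (hD : domPoly H = domPoly (completeBipartiteGraph (Fin a) (Fin b))) :
    Nonempty (H ≃g completeBipartiteGraph (Fin a) (Fin b)) := by
  classical
  wlog hab' : a + 2 ≤ b generalizing a b
  · obtain ⟨e⟩ := this hb ha (by rwa [abs_sub_comm])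
      (hD.trans (domPoly_congr (completeBipartiteGraphComm _ _)))
      (by rcases abs_cases ((a : ℤ) - b) with ⟨h, _⟩ | ⟨h, _⟩ <;> omega)
    exact ⟨e.trans (completeBipartiteGraphComm _ _)⟩
  obtain ⟨k, rfl⟩ : ∃ k, b = k + 2 := ⟨b - 2, by omega⟩
  have : Nonempty (Fin a) := ⟨⟨0, ha⟩⟩
  have hW : Fintype.card W = a + (k + 2) := by
    rw [← natDegree_domPoly H, hD, natDegree_domPoly, Fintype.card_sum, Fintype.card_fin,
      Fintype.card_fin]
  obtain ⟨B, hB, hjoin, hjoin'⟩ := exists_isJoinSide_of_card_nonDominatingSets ha (by omega) hW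
    fun i hi => by
      rw [card_nonDominatingSets_eq_of_domPoly_eq hD hi]
      simpa using card_nonDominatingSets_completeBipartiteGraph (α := Fin a) (β := Fin (k + 2)) hi
  obtain ⟨e⟩ := hjoin.nonempty_iso_completeBipartiteGraph hjoin'
  exact ⟨e.trans (SimpleGraph.completeBipartiteGraphCongr
    (finCongr (by rw [card_compl, hW, hB]; omega)) (finCongr hB))⟩
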